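/- arXiv:1309.5715 — 2 statements merged into one kernel-verified Lean document; each statement's English description precedes it below -/
import Mathlib

section
/- Integral Riedel–Sahoo theorem: If f : ℝ → ℝ is continuous on the closed interval [a,b] (with a < b), then there exists a point η ∈ (a,b) such that f(η) = (1/(η-a)) · ∫_a^η f(t) dt + ((η-a)/2) · (f(b)-f(a))/(b-a). -/
/-!
With `F x = ∫ t in a..x, f t`, the claim is the Riedel–Sahoo mean value theorem for `F`:
`F' η = slope F a η + (η - a) / 2 * slope F' a b`. Subtracting `(x - a) ^ 2 / 2 * slope F' a b`
from `F` equalises its derivatives at `a` and `b`, which reduces it to Flett's theorem: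
`g' a = g' b` implies `g' η = slope g a η`. For Flett, the difference quotient
`φ = slope g a`, extended by `g' a` at `a`, satisfies `(b - a) * φ' b = φ a - φ b`; so if
`φ b < φ a` then `φ' b > 0` and the minimum of `φ` on `[a, b]` is interior (symmetrically for
`φ b > φ a`, Rolle if equal), giving `φ' η = 0`.
-/

open Set Topology

section

variable {a b : ℝ} {g g' : ℝ → ℝ}

theorem exists_hasDerivWithinAt_eq_zero_of_lt_of_deriv_pos (hab : a < b)
    (hg : ContinuousOn g (Icc a b))
    (hderiv : ∀ x ∈ Ioc a b, HasDerivWithinAt g (g' x) (Icc a b) x)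
    (hlt : g b < g a) (hpos : 0 < g' b) : ∃ η ∈ Ioo a b, g' η = 0 := by
  obtain ⟨c, hc, hmin⟩ := isCompact_Icc.exists_isMinOn (nonempty_Icc.2 hab.le) hg
  have hca : a < c := hc.1.lt_of_ne <| by
    rintro rfl
    exact (hmin (right_mem_Icc.2 hab.le)).not_gt hlt
  have hcb : c < b := hc.2.lt_of_ne <| by
    rintro rfl
    have hdir : a - c ∈ posTangentConeAt (Icc a c) c :=
      sub_mem_posTangentConeAt_of_segment_subset (by rw [segment_symm, segment_eq_Icc hab.le])
    have := hmin.localize.hasFDerivWithinAt_nonneg (hderiv c ⟨hab, le_rfl⟩) hdir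
    rw [ContinuousLinearMap.toSpanSingleton_apply, smul_eq_mul] at this
    nlinarith
  have hnhds : Icc a b ∈ 𝓝 c := Icc_mem_nhds hca hcb
  exact ⟨c, ⟨hca, hcb⟩, (hmin.isLocalMin hnhds).hasDerivAt_eq_zero
    ((hderiv c ⟨hca, hcb.le⟩).hasDerivAt hnhds)⟩

theorem exists_hasDerivWithinAt_eq_zero_of_deriv_eq_neg_slope (hab : a < b)
    (hg : ContinuousOn g (Icc a b))
    (hderiv : ∀ x ∈ Ioc a b, HasDerivWithinAt g (g' x) (Icc a b) x)
    (hb : g' b = -slope g a b) : ∃ η ∈ Ioo a b, g' η = 0 := by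
  have hba : 0 < b - a := sub_pos.2 hab
  rw [slope_def_field] at hb
  rcases lt_trichotomy (g b) (g a) with hlt | heq | hgt
  · refine exists_hasDerivWithinAt_eq_zero_of_lt_of_deriv_pos hab hg hderiv hlt ?_
    rw [hb, neg_pos]
    exact div_neg_of_neg_of_pos (sub_neg.2 hlt) hba
  · exact exists_hasDerivAt_eq_zero hab hg heq.symm
      fun x hx ↦ (hderiv x ⟨hx.1, hx.2.le⟩).hasDerivAt (Icc_mem_nhds hx.1 hx.2)
  · have hpos : 0 < -g' b := by
      rw [hb, neg_neg]
      exact div_pos (sub_pos.2 hgt) hba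
    obtain ⟨η, hη, hη0⟩ := exists_hasDerivWithinAt_eq_zero_of_lt_of_deriv_pos (g' := -g')
      hab hg.neg (fun x hx ↦ (hderiv x hx).neg) (neg_lt_neg hgt) hpos
    exact ⟨η, hη, neg_eq_zero.1 hη0⟩

theorem HasDerivWithinAt.hasDerivWithinAt_slope {d x : ℝ} {s : Set ℝ}
    (hg : HasDerivWithinAt g d s x) (hx : x ≠ a) :
    HasDerivWithinAt (slope g a) ((d - slope g a x) / (x - a)) s x := by
  have hxa : x - a ≠ 0 := sub_ne_zero.2 hx
  have hslope : slope g a = fun y ↦ (g y - g a) / (y - a) := funext (slope_def_field g a)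
  rw [hslope]
  refine ((hg.sub_const (g a)).div ((hasDerivWithinAt_id x s).sub_const a) hxa).congr_deriv ?_
  simp only [id]
  field_simp

/-- **Flett's mean value theorem.** -/
theorem exists_hasDerivWithinAt_eq_slope_of_deriv_left_eq_right (hab : a < b)
    (hg : ∀ x ∈ Icc a b, HasDerivWithinAt g (g' x) (Icc a b) x) (hg' : g' a = g' b) :
    ∃ η ∈ Ioo a b, g' η = slope g a η := by
  set φ := Function.update (slope g a) a (g' a)
  have hφ : ∀ x ∈ Ioc a b,
      HasDerivWithinAt φ ((g' x - slope g a x) / (x - a)) (Icc a b) x := fun x hx ↦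
    ((hg x (Ioc_subset_Icc_self hx)).hasDerivWithinAt_slope hx.1.ne').congr_of_eventuallyEq
      (eventually_nhdsWithin_of_eventually_nhds <| (eventually_ne_nhds hx.1.ne').mono
        fun y hy ↦ Function.update_of_ne hy _ _)
      (Function.update_of_ne hx.1.ne' _ _)
  have hcont : ContinuousOn φ (Icc a b) := by
    intro x hx
    rcases hx.1.eq_or_lt with rfl | hax
    · exact continuousWithinAt_update_same.2 (hasDerivWithinAt_iff_tendsto_slope.1 (hg _ hx))
    · exact (hφ x ⟨hax, hx.2⟩).continuousWithinAt
  obtain ⟨η, hη, hη0⟩ := exists_hasDerivWithinAt_eq_zero_of_deriv_eq_neg_slope hab hcont hφ <| by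
    simp only [slope_def_field, φ, Function.update_self, Function.update_of_ne hab.ne', hg']
    ring
  refine ⟨η, hη, ?_⟩
  rwa [div_eq_zero_iff, sub_eq_zero, sub_eq_zero, or_iff_left hη.1.ne'] at hη0

/-- **Riedel–Sahoo mean value theorem.** -/
theorem exists_hasDerivWithinAt_eq_slope_add_mul_slope_deriv (hab : a < b)
    (hg : ∀ x ∈ Icc a b, HasDerivWithinAt g (g' x) (Icc a b) x) :
    ∃ η ∈ Ioo a b, g' η = slope g a η + (η - a) / 2 * slope g' a b := by
  set c := slope g' a b
  have hk : ∀ x ∈ Icc a b, HasDerivWithinAt (fun y ↦ g y - (y - a) ^ 2 / 2 * c)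
      (g' x - (x - a) * c) (Icc a b) x := fun x hx ↦
    ((hg x hx).sub ((((hasDerivWithinAt_id x _).sub_const a).pow 2).div_const 2 |>.mul_const c))
      |>.congr_deriv (by simp only [id]; ring)
  obtain ⟨η, hη, hηk⟩ := exists_hasDerivWithinAt_eq_slope_of_deriv_left_eq_right hab hk <| by
    have : (b - a) * c = g' b - g' a := by simpa using sub_smul_slope g' a b
    linear_combination this
  refine ⟨η, hη, ?_⟩
  have hηa : η - a ≠ 0 := sub_ne_zero.2 hη.1.ne'
  rw [slope_def_field] at hηk ⊢
  field_simp at hηk ⊢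
  linear_combination hηk

theorem ContinuousOn.hasDerivWithinAt_integral_Icc {E : Type*} [NormedAddCommGroup E]
    [NormedSpace ℝ E] [CompleteSpace E] {f : ℝ → E} (hf : ContinuousOn f (Icc a b)) {x : ℝ}
    (hx : x ∈ Icc a b) :
    HasDerivWithinAt (fun u ↦ ∫ t in a..u, f t) (f x) (Icc a b) x := by
  have : Fact (x ∈ Icc a b) := ⟨hx⟩ -- selects the `FTCFilter` instance for `Icc a b`
  exact intervalIntegral.integral_hasDerivWithinAt_right
    (hf.mono (uIcc_subset_Icc (left_mem_Icc.2 (hx.1.trans hx.2)) hx)).intervalIntegrable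
    (hf.stronglyMeasurableAtFilter_nhdsWithin measurableSet_Icc x) (hf x hx)

end

/-- **Integral Riedel–Sahoo theorem.** If `f` is continuous on `[a,b]`, then there exists
`η ∈ (a,b)` with `f(η) = (1/(η-a)) ∫_a^η f(t) dt + ((η-a)/2)·(f(b)-f(a))/(b-a)`. -/
theorem integral_riedel_sahoo_theorem (f : ℝ → ℝ) (a b : ℝ) (hab : a < b)
    (hfc : ContinuousOn f (Set.Icc a b)) :
    ∃ η ∈ Set.Ioo a b,
      f η = (1 / (η - a)) * (∫ t in a..η, f t) + (η - a) / 2 * ((f b - f a) / (b - a)) := by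
  obtain ⟨η, hη, hfη⟩ := exists_hasDerivWithinAt_eq_slope_add_mul_slope_deriv hab
    fun x hx ↦ hfc.hasDerivWithinAt_integral_Icc hx
  refine ⟨η, hη, ?_⟩
  rw [hfη, slope_def_field, slope_def_field, intervalIntegral.integral_same, sub_zero,
    one_div_mul_eq_div]
end

section
/- Integral Tong-type theorem: Let f : ℝ → ℝ be continuous on the closed interval [a,b] (with a < b). If B_f(a,b) = J_f(a,b), then there exists a point η ∈ (a,b) such that f(η) = (1/(η-a)) · ∫_a^η f(t) dt. -/
/-!
Write `F x = ∫_a^x f`. Integrating `t ↦ t · f t` by parts turns `B_f(a,b) = J_f(a,b)` into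
`∫_a^b F = (b - a)/2 · (F a + F b)`, i.e. the trapezoidal rule is exact for `F`. Then
`G x = ∫_a^x F - (x - a)/2 · (F a + F x)` vanishes at both ends, and Rolle's theorem applied
to `G` gives `η` with `F η - F a = (η - a) · F' η`, which is the claim since `F a = 0` and
`F' = f`.
-/

open Set

section

variable {f : ℝ → ℝ} {a b : ℝ}

theorem hasDerivAt_integral_of_continuousOn_Icc (hf : ContinuousOn f (Icc a b)) {x : ℝ}
    (hx : x ∈ Ioo a b) : HasDerivAt (fun u => ∫ t in a..u, f t) (f x) x := by
  have hcont : ContinuousAt f x := hf.continuousAt (Icc_mem_nhds hx.1 hx.2)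
  refine intervalIntegral.integral_hasDerivAt_right ?_
    ((hf.mono Ioo_subset_Icc_self).stronglyMeasurableAtFilter isOpen_Ioo x hx) hcont
  exact (hf.mono (Icc_subset_Icc le_rfl hx.2.le)).intervalIntegrable_of_Icc hx.1.le

theorem continuousOn_integral_of_continuousOn_Icc (hab : a ≤ b) (hf : ContinuousOn f (Icc a b)) :
    ContinuousOn (fun u => ∫ t in a..u, f t) (Icc a b) := by
  rw [← uIcc_of_le hab] at hf ⊢
  exact intervalIntegral.continuousOn_primitive_interval (hf.integrableOn_compact isCompact_uIcc)

theorem integral_id_mul_eq_sub_integral_integral (hab : a ≤ b) (hf : ContinuousOn f (Icc a b)) :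
    ∫ t in a..b, t * f t = b * (∫ t in a..b, f t) - ∫ x in a..b, ∫ t in a..x, f t := by
  have hF := continuousOn_integral_of_continuousOn_Icc hab hf
  have hF' : ∀ x ∈ Ioo (min a b) (max a b),
      HasDerivAt (fun u => ∫ t in a..u, f t) (f x) x := by
    rw [min_eq_left hab, max_eq_right hab]
    exact fun x hx => hasDerivAt_integral_of_continuousOn_Icc hf hx
  rw [← uIcc_of_le hab] at hf hF
  simpa only [id_eq, intervalIntegral.integral_same, mul_zero, sub_zero, one_mul] using
    intervalIntegral.integral_mul_deriv_eq_deriv_mul_of_hasDerivAt (u := id) (u' := fun _ => 1)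
      continuous_id.continuousOn hF (fun x _ => hasDerivAt_id x) hF'
      intervalIntegrable_const hf.intervalIntegrable

end

theorem exists_sub_eq_mul_deriv_of_integral_eq_trapezoid {F F' : ℝ → ℝ} {a b : ℝ}
    (hab : a < b) (hF : ContinuousOn F (Icc a b)) (hF' : ∀ x ∈ Ioo a b, HasDerivAt F (F' x) x)
    (htrap : ∫ x in a..b, F x = (b - a) / 2 * (F a + F b)) :
    ∃ η ∈ Ioo a b, F η - F a = (η - a) * F' η := by
  set G : ℝ → ℝ := fun x => (∫ t in a..x, F t) - (x - a) / 2 * (F a + F x)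
  have hG : ContinuousOn G (Icc a b) :=
    (continuousOn_integral_of_continuousOn_Icc hab.le hF).sub
      ((continuousOn_id.sub continuousOn_const).div_const 2 |>.mul (continuousOn_const.add hF))
  have hG' : ∀ x ∈ Ioo a b, HasDerivAt G ((F x - F a - (x - a) * F' x) / 2) x := by
    intro x hx
    have hlin := ((hasDerivAt_id x).sub_const a).div_const 2
    refine ((hasDerivAt_integral_of_continuousOn_Icc hF hx).sub
      (hlin.mul ((hF' x hx).const_add (F a)))).congr_deriv ?_
    simp only [id_eq]
    ring
  obtain ⟨η, hη, hη0⟩ := exists_hasDerivAt_eq_zero hab hG (by simp [G, htrap]) hG'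
  exact ⟨η, hη, by linarith⟩

open intervalIntegral in
/-- **Integral Tong-type theorem.** Let `f` be continuous on `[a,b]`. If
`B_f(a,b) = J_f(a,b)`, where `B_f(a,b) = ((b-a)/2)·I_f(a,b)`,
`J_f(a,b) = b·I_f(a,b) - (1/(b-a)) ∫_a^b t·f(t) dt` and
`I_f(a,b) = (1/(b-a)) ∫_a^b f(t) dt`, then there exists `η ∈ (a,b)` with
`f(η) = (1/(η-a)) ∫_a^η f(t) dt`. -/
theorem integral_tong_theorem (f : ℝ → ℝ) (a b : ℝ) (hab : a < b)
    (hfc : ContinuousOn f (Set.Icc a b))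
    (hmean : (b - a) / 2 * ((1 / (b - a)) * ∫ t in a..b, f t) =
        b * ((1 / (b - a)) * ∫ t in a..b, f t) - (1 / (b - a)) * ∫ t in a..b, t * f t) :
    ∃ η ∈ Set.Ioo a b, f η = (1 / (η - a)) * ∫ t in a..η, f t := by
  set F : ℝ → ℝ := fun x => ∫ t in a..x, f t
  have htrap : ∫ x in a..b, F x = (b - a) / 2 * (F a + F b) := by
    have hba : b - a ≠ 0 := sub_ne_zero.mpr hab.ne'
    rw [integral_id_mul_eq_sub_integral_integral hab.le hfc] at hmean
    field_simp at hmean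
    simp only [F, integral_same]
    linear_combination -hmean / 2
  obtain ⟨η, hη, hFη⟩ := exists_sub_eq_mul_deriv_of_integral_eq_trapezoid hab
    (continuousOn_integral_of_continuousOn_Icc hab.le hfc)
    (fun x hx => hasDerivAt_integral_of_continuousOn_Icc hfc hx) htrap
  refine ⟨η, hη, ?_⟩
  simp only [integral_same, sub_zero] at hFη
  rw [hFη]
  field_simp [sub_ne_zero.mpr hη.1.ne']
end
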